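/- Every ReLU-activated decoder block is a cubic spline: if β : ℝ^{n×p} → ℝ^{mh×p} is an h-headed ReLU masked attention module and φ : ℝ^{mh×p} → ℝ^{n'×p} is a ReLU feed-forward neural network applied columnwise, then the decoder block δ = φ ∘ β : ℝ^{n×p} → ℝ^{n'×p} is a matrix-valued spline of degree 3. -/

import Mathlib

noncomputable section

open Matrix

/-- The rectified linear unit. -/
def relu (x : ℝ) : ℝ := max x 0

/-- Entrywise ReLU of a matrix. -/
def matRelu {a b : ℕ} (M : Matrix (Fin a) (Fin b) ℝ) : Matrix (Fin a) (Fin b) ℝ :=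
  Matrix.of fun i j => relu (M i j)

/-- A continuous function `f : ℝ^ι → ℝ` is a (polynomial) spline of degree `k` if there are
polynomials `π_1, …, π_b`, each of total degree at most `k`, such that on every (nonempty) cell
of the induced semialgebraic sign partition, `f` agrees with a polynomial of degree at most `k`. -/
def IsSpline (ι : Type) [Fintype ι] (k : ℕ) (f : (ι → ℝ) → ℝ) : Prop :=
  Continuous f ∧
  ∃ (b : ℕ) (π : Fin b → MvPolynomial ι ℝ),
    (∀ i, (π i).totalDegree ≤ k) ∧
    ∀ θ : Fin b → SignType,
      ∃ ξ : MvPolynomial ι ℝ, ξ.totalDegree ≤ k ∧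
        ∀ x : ι → ℝ, (∀ i, SignType.sign (MvPolynomial.eval x (π i)) = θ i) →
          f x = MvPolynomial.eval x ξ

/-- A matrix-variate, matrix-valued function is a spline of degree `k` if each coordinate
function, regarded as a function of the entries of the input matrix, is a spline of degree `k`. -/
def IsMatrixSpline {n p m q : ℕ} (k : ℕ)
    (f : Matrix (Fin n) (Fin p) ℝ → Matrix (Fin m) (Fin q) ℝ) : Prop :=
  ∀ (i : Fin m) (j : Fin q),
    IsSpline (Fin n × Fin p) k (fun x => f (Matrix.of fun a b => x (a, b)) i j)

/-- The ReLU-activated masked attention module: the score matrix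
`(A_K X + B_K)ᵀ (A_Q X + B_Q)` is ReLU'd on its upper-triangular part (`i ≤ j`) and the
strictly lower-triangular entries (`i > j`) are set to `0`, before multiplying by the values. -/
def maskedAttention {n p d m : ℕ}
    (AQ AK : Matrix (Fin d) (Fin n) ℝ) (AV : Matrix (Fin m) (Fin n) ℝ)
    (BQ BK : Matrix (Fin d) (Fin p) ℝ) (BV : Matrix (Fin m) (Fin p) ℝ)
    (X : Matrix (Fin n) (Fin p) ℝ) : Matrix (Fin m) (Fin p) ℝ :=
  (AV * X + BV) *
    Matrix.of (fun i j : Fin p =>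
      if i ≤ j then relu (((AK * X + BK)ᵀ * (AQ * X + BQ)) i j) else 0)

/-- An `h`-headed ReLU masked attention module: `h` masked attention modules stacked
vertically, giving a map `ℝ^{n×p} → ℝ^{hm×p}`. -/
def multiheadMaskedAttention {n p d m h : ℕ}
    (AQ AK : Fin h → Matrix (Fin d) (Fin n) ℝ) (AV : Fin h → Matrix (Fin m) (Fin n) ℝ)
    (BQ BK : Fin h → Matrix (Fin d) (Fin p) ℝ) (BV : Fin h → Matrix (Fin m) (Fin p) ℝ)
    (X : Matrix (Fin n) (Fin p) ℝ) : Matrix (Fin (h * m)) (Fin p) ℝ :=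
  Matrix.of fun i j =>
    maskedAttention (AQ (finProdFinEquiv.symm i).1) (AK (finProdFinEquiv.symm i).1)
      (AV (finProdFinEquiv.symm i).1) (BQ (finProdFinEquiv.symm i).1)
      (BK (finProdFinEquiv.symm i).1) (BV (finProdFinEquiv.symm i).1) X
      (finProdFinEquiv.symm i).2 j

/-- ReLU feed-forward neural networks `φ(x) = A_{l+1} σ_l A_l ⋯ σ_1 A_1 x + b_{l+1}`, where
`σ_i(x) = ReLU(x + b_i)` coordinatewise: the base case is an affine map, and each additional
layer precomposes with `x ↦ ReLU(A x + b)`. -/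
inductive IsNN : ∀ {a b : ℕ}, ((Fin a → ℝ) → (Fin b → ℝ)) → Prop
  | affine {a b : ℕ} (A : Matrix (Fin b) (Fin a) ℝ) (c : Fin b → ℝ) :
      IsNN (fun x => A.mulVec x + c)
  | layer {a b c : ℕ} (A : Matrix (Fin b) (Fin a) ℝ) (v : Fin b → ℝ)
      {g : (Fin b → ℝ) → (Fin c → ℝ)} (hg : IsNN g) :
      IsNN (fun x => g (fun i => relu (A.mulVec x i + v i)))

/-- Apply a map `φ : ℝ^a → ℝ^c` columnwise to a matrix `X ∈ ℝ^{a×p}`. -/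
def colwise {a c p : ℕ} (φ : (Fin a → ℝ) → (Fin c → ℝ))
    (X : Matrix (Fin a) (Fin p) ℝ) : Matrix (Fin c) (Fin p) ℝ :=
  Matrix.of fun i j => φ (fun r => X r j) i

/-! Concatenating the lists of cut polynomials of two splines gives a common refinement, on
whose cells sums and products are again polynomials; products add degrees. For `relu ∘ f`, add
the pieces of `f` themselves to the cut polynomials: on each new cell the sign of the current
piece is fixed, so `relu ∘ f` is that piece or `0`. Thus affine maps and ReLU preserve the
degree, the attention scores `(A_K X + B_K)ᵀ (A_Q X + B_Q)` and their masked ReLU have degree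
`2`, multiplying by the values `A_V X + B_V` gives degree `3`, and a ReLU network applied
columnwise keeps degree `3`. -/

theorem forall_totalDegree_append_le {ι : Type} {k b c : ℕ} {π : Fin b → MvPolynomial ι ℝ}
    {ρ : Fin c → MvPolynomial ι ℝ} (hπ : ∀ i, (π i).totalDegree ≤ k)
    (hρ : ∀ i, (ρ i).totalDegree ≤ k) : ∀ i, (Fin.append π ρ i).totalDegree ≤ k := by
  rw [Fin.forall_fin_add]
  simpa using ⟨hπ, hρ⟩

section Spline

variable {ι : Type} {k k₁ k₂ : ℕ} {f g : (ι → ℝ) → ℝ}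

/-- The last clause of `IsSpline`, for a fixed list `π` of cut polynomials. -/
def IsPolyOnSignCells {b : ℕ} (π : Fin b → MvPolynomial ι ℝ) (k : ℕ) (f : (ι → ℝ) → ℝ) :
    Prop :=
  ∀ θ : Fin b → SignType, ∃ ξ : MvPolynomial ι ℝ, ξ.totalDegree ≤ k ∧
    ∀ x : ι → ℝ, (∀ i, SignType.sign (MvPolynomial.eval x (π i)) = θ i) →
      f x = MvPolynomial.eval x ξ

namespace IsPolyOnSignCells

variable {b c : ℕ} {π : Fin b → MvPolynomial ι ℝ}

theorem append_left (hf : IsPolyOnSignCells π k f) (ρ : Fin c → MvPolynomial ι ℝ) :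
    IsPolyOnSignCells (Fin.append π ρ) k f := by
  intro θ
  obtain ⟨ξ, hξ, hfξ⟩ := hf fun i => θ (Fin.castAdd c i)
  exact ⟨ξ, hξ, fun x hx => hfξ x fun i => by simpa using hx (Fin.castAdd c i)⟩

theorem append_right (ρ : Fin c → MvPolynomial ι ℝ) (hf : IsPolyOnSignCells π k f) :
    IsPolyOnSignCells (Fin.append ρ π) k f := by
  intro θ
  obtain ⟨ξ, hξ, hfξ⟩ := hf fun i => θ (Fin.natAdd c i)
  exact ⟨ξ, hξ, fun x hx => hfξ x fun i => by simpa using hx (Fin.natAdd c i)⟩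

theorem add (hf : IsPolyOnSignCells π k f) (hg : IsPolyOnSignCells π k g) :
    IsPolyOnSignCells π k (fun x => f x + g x) := by
  intro θ
  obtain ⟨ξ, hξ, hfξ⟩ := hf θ
  obtain ⟨η, hη, hgη⟩ := hg θ
  refine ⟨ξ + η, (MvPolynomial.totalDegree_add ξ η).trans (max_le hξ hη), fun x hx => ?_⟩
  show f x + g x = _
  rw [map_add, hfξ x hx, hgη x hx]

theorem mul (hf : IsPolyOnSignCells π k₁ f) (hg : IsPolyOnSignCells π k₂ g) :
    IsPolyOnSignCells π (k₁ + k₂) (fun x => f x * g x) := by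
  intro θ
  obtain ⟨ξ, hξ, hfξ⟩ := hf θ
  obtain ⟨η, hη, hgη⟩ := hg θ
  refine ⟨ξ * η, (MvPolynomial.totalDegree_mul ξ η).trans (add_le_add hξ hη), fun x hx => ?_⟩
  show f x * g x = _
  rw [map_mul, hfξ x hx, hgη x hx]

end IsPolyOnSignCells

variable [Fintype ι]

theorem isSpline_eval (ξ : MvPolynomial ι ℝ) (hξ : ξ.totalDegree ≤ k) :
    IsSpline ι k (fun x => MvPolynomial.eval x ξ) :=
  ⟨MvPolynomial.continuous_eval ξ, 0, Fin.elim0, fun i => i.elim0,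
    fun _ => ⟨ξ, hξ, fun _ _ => rfl⟩⟩

theorem isSpline_const (c : ℝ) : IsSpline ι k (fun _ => c) := by
  simpa using isSpline_eval (ι := ι) (k := k) (MvPolynomial.C c) (by simp)

theorem isSpline_apply (s : ι) : IsSpline ι 1 (fun x => x s) := by
  simpa using isSpline_eval (ι := ι) (MvPolynomial.X s) (by simp)

theorem IsSpline.exists_common_cells (hf : IsSpline ι k₁ f) (hg : IsSpline ι k₂ g) :
    ∃ (b : ℕ) (π : Fin b → MvPolynomial ι ℝ), (∀ i, (π i).totalDegree ≤ max k₁ k₂) ∧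
      IsPolyOnSignCells π k₁ f ∧ IsPolyOnSignCells π k₂ g := by
  obtain ⟨-, b₁, π₁, hπ₁, hf : IsPolyOnSignCells π₁ k₁ f⟩ := hf
  obtain ⟨-, b₂, π₂, hπ₂, hg : IsPolyOnSignCells π₂ k₂ g⟩ := hg
  exact ⟨b₁ + b₂, Fin.append π₁ π₂,
    forall_totalDegree_append_le (fun i => (hπ₁ i).trans (le_max_left k₁ k₂))
      (fun i => (hπ₂ i).trans (le_max_right k₁ k₂)),
    hf.append_left π₂, hg.append_right π₁⟩

theorem IsSpline.add (hf : IsSpline ι k f) (hg : IsSpline ι k g) :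
    IsSpline ι k (fun x => f x + g x) := by
  obtain ⟨b, π, hπ, hfπ, hgπ⟩ := hf.exists_common_cells hg
  exact ⟨hf.1.add hg.1, b, π, fun i => (hπ i).trans (max_self k).le, hfπ.add hgπ⟩

theorem IsSpline.mul (hf : IsSpline ι k₁ f) (hg : IsSpline ι k₂ g) :
    IsSpline ι (k₁ + k₂) (fun x => f x * g x) := by
  obtain ⟨b, π, hπ, hfπ, hgπ⟩ := hf.exists_common_cells hg
  exact ⟨hf.1.mul hg.1, b, π, fun i => (hπ i).trans (max_le_add_of_nonneg k₁.zero_le k₂.zero_le),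
    hfπ.mul hgπ⟩

theorem IsSpline.const_mul (c : ℝ) (hf : IsSpline ι k f) : IsSpline ι k (fun x => c * f x) := by
  simpa using (isSpline_const (k := 0) c).mul hf

theorem IsSpline.sum {α : Type*} (s : Finset α) (f : α → (ι → ℝ) → ℝ)
    (hf : ∀ a ∈ s, IsSpline ι k (f a)) : IsSpline ι k (fun x => ∑ a ∈ s, f a x) := by
  classical
  induction s using Finset.induction with
  | empty => simpa using isSpline_const 0
  | insert a s ha ih =>
    simp only [Finset.sum_insert ha]
    exact (hf a (s.mem_insert_self a)).add (ih fun b hb => hf b (Finset.mem_insert_of_mem hb))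

theorem isSpline_dotProduct_add {a : ℕ} (v : Fin a → ℝ) (c : ℝ) {g : Fin a → (ι → ℝ) → ℝ}
    (hg : ∀ r, IsSpline ι k (g r)) : IsSpline ι k (fun x => v ⬝ᵥ (fun r => g r x) + c) :=
  (IsSpline.sum Finset.univ _ fun r _ => (hg r).const_mul (v r)).add (isSpline_const c)

theorem continuous_relu : Continuous relu :=
  continuous_id.max continuous_const

theorem relu_eq_ite_sign (y : ℝ) : relu y = if SignType.sign y = .pos then y else 0 := by
  rcases lt_trichotomy y 0 with hy | rfl | hy
  · simp [relu, hy, hy.le]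
  · simp [relu]
  · simp [relu, hy, hy.le]

theorem IsSpline.relu (hf : IsSpline ι k f) : IsSpline ι k (fun x => relu (f x)) := by
  obtain ⟨hc, b, π, hπ, hf⟩ := hf
  choose ξ hξ hfξ using hf
  let e := Fintype.equivFin (Fin b → SignType)
  refine ⟨continuous_relu.comp hc, _, Fin.append π (fun j => ξ (e.symm j)),
    forall_totalDegree_append_le hπ fun j => hξ _, fun θ => ?_⟩
  set θ₀ : Fin b → SignType := fun i => θ (Fin.castAdd _ i)
  refine ⟨if θ (Fin.natAdd b (e θ₀)) = .pos then ξ θ₀ else 0, by split_ifs <;> simp [hξ],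
    fun x hx => ?_⟩
  have hfx : f x = MvPolynomial.eval x (ξ θ₀) :=
    hfξ θ₀ x fun i => by simpa using hx (Fin.castAdd _ i)
  have hsign : SignType.sign (MvPolynomial.eval x (ξ θ₀)) = θ (Fin.natAdd b (e θ₀)) := by
    simpa using hx (Fin.natAdd b (e θ₀))
  dsimp only
  rw [hfx, relu_eq_ite_sign, hsign, apply_ite (MvPolynomial.eval x), map_zero]

theorem IsNN.isSpline_comp {a c : ℕ} {φ : (Fin a → ℝ) → (Fin c → ℝ)} (hφ : IsNN φ)
    {g : Fin a → (ι → ℝ) → ℝ} (hg : ∀ r, IsSpline ι k (g r)) (i : Fin c) :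
    IsSpline ι k (fun x => φ (fun r => g r x) i) := by
  induction hφ with
  | affine A c => exact isSpline_dotProduct_add (A i) (c i) hg
  | layer A v _ ih => exact ih (fun j => (isSpline_dotProduct_add (A j) (v j) hg).relu) i

end Spline

section MatrixSpline

variable {n p m q r : ℕ} {k k₁ k₂ : ℕ}

theorem isMatrixSpline_id : IsMatrixSpline 1 (fun X : Matrix (Fin n) (Fin p) ℝ => X) :=
  fun i j => isSpline_apply (i, j)

theorem IsMatrixSpline.transpose {F : Matrix (Fin n) (Fin p) ℝ → Matrix (Fin m) (Fin q) ℝ}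
    (hF : IsMatrixSpline k F) : IsMatrixSpline k (fun X => (F X)ᵀ) :=
  fun i j => hF j i

theorem IsMatrixSpline.const_mul_add {F : Matrix (Fin n) (Fin p) ℝ → Matrix (Fin m) (Fin q) ℝ}
    (hF : IsMatrixSpline k F) (A : Matrix (Fin r) (Fin m) ℝ) (B : Matrix (Fin r) (Fin q) ℝ) :
    IsMatrixSpline k (fun X => A * F X + B) :=
  fun i j => isSpline_dotProduct_add (A i) (B i j) fun l => hF l j

theorem IsMatrixSpline.mul {F : Matrix (Fin n) (Fin p) ℝ → Matrix (Fin m) (Fin q) ℝ}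
    {G : Matrix (Fin n) (Fin p) ℝ → Matrix (Fin q) (Fin r) ℝ}
    (hF : IsMatrixSpline k₁ F) (hG : IsMatrixSpline k₂ G) :
    IsMatrixSpline (k₁ + k₂) (fun X => F X * G X) :=
  fun i j => IsSpline.sum Finset.univ _ fun l _ => (hF i l).mul (hG l j)

theorem IsMatrixSpline.colwise {F : Matrix (Fin n) (Fin p) ℝ → Matrix (Fin m) (Fin q) ℝ}
    (hF : IsMatrixSpline k F) {φ : (Fin m → ℝ) → (Fin r → ℝ)} (hφ : IsNN φ) :
    IsMatrixSpline k (fun X => colwise φ (F X)) :=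
  fun i j => hφ.isSpline_comp (fun l => hF l j) i

theorem isMatrixSpline_maskedAttention {d : ℕ}
    (AQ AK : Matrix (Fin d) (Fin n) ℝ) (AV : Matrix (Fin m) (Fin n) ℝ)
    (BQ BK : Matrix (Fin d) (Fin p) ℝ) (BV : Matrix (Fin m) (Fin p) ℝ) :
    IsMatrixSpline 3 (maskedAttention AQ AK AV BQ BK BV) := by
  have scores : IsMatrixSpline 2
      (fun X : Matrix (Fin n) (Fin p) ℝ => (AK * X + BK)ᵀ * (AQ * X + BQ)) :=
    (isMatrixSpline_id.const_mul_add AK BK).transpose.mul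
      (isMatrixSpline_id.const_mul_add AQ BQ)
  have masked : IsMatrixSpline 2 (fun X : Matrix (Fin n) (Fin p) ℝ =>
      Matrix.of fun i j : Fin p =>
        if i ≤ j then relu (((AK * X + BK)ᵀ * (AQ * X + BQ)) i j) else 0) := by
    intro i j
    by_cases hij : i ≤ j
    · simpa only [of_apply, if_pos hij] using (scores i j).relu
    · simpa only [of_apply, if_neg hij] using isSpline_const 0
  exact (isMatrixSpline_id.const_mul_add AV BV).mul masked

theorem isMatrixSpline_multiheadMaskedAttention {d h : ℕ}
    (AQ AK : Fin h → Matrix (Fin d) (Fin n) ℝ) (AV : Fin h → Matrix (Fin m) (Fin n) ℝ)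
    (BQ BK : Fin h → Matrix (Fin d) (Fin p) ℝ) (BV : Fin h → Matrix (Fin m) (Fin p) ℝ) :
    IsMatrixSpline 3 (multiheadMaskedAttention AQ AK AV BQ BK BV) := fun i j =>
  let e := finProdFinEquiv.symm i
  isMatrixSpline_maskedAttention (AQ e.1) (AK e.1) (AV e.1) (BQ e.1) (BK e.1) (BV e.1) e.2 j

end MatrixSpline

/-- Every ReLU-activated decoder block — a multihead ReLU masked attention module followed by a
ReLU feed-forward neural network applied columnwise — is a cubic spline. -/
theorem decoder_block_is_cubic_spline (n p d m h n' : ℕ)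
    (AQ AK : Fin h → Matrix (Fin d) (Fin n) ℝ) (AV : Fin h → Matrix (Fin m) (Fin n) ℝ)
    (BQ BK : Fin h → Matrix (Fin d) (Fin p) ℝ) (BV : Fin h → Matrix (Fin m) (Fin p) ℝ)
    (φ : (Fin (h * m) → ℝ) → (Fin n' → ℝ)) (hφ : IsNN φ) :
    IsMatrixSpline 3 (fun X => colwise φ (multiheadMaskedAttention AQ AK AV BQ BK BV X)) :=
  (isMatrixSpline_multiheadMaskedAttention AQ AK AV BQ BK BV).colwise hφ
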